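/- arXiv:1208.1003 — 2 statements merged into one kernel-verified Lean document; each statement's English description precedes it below -/
import Mathlib

section
/- (Levine-type blow-up lemma) Let H : [0,∞) → ℝ be positive and twice differentiable with H''(t)H(t) − (1+ν)(H'(t))² ≥ 0 for all t ≥ 0, where ν > 0. If H(0) > 0 and H'(0) > 0, then there exists t₁ ≤ H(0)/(ν H'(0)) such that H(t) → ∞ as t → t₁⁻ (equivalently, H cannot be extended as a finite twice-differentiable function on [0, H(0)/(νH'(0))]). -/
/-!
For `F = H ^ (-ν)` one computes `F'' = -ν H ^ (-ν - 2) (H'' H - (1 + ν) H' ^ 2) ≤ 0`, so `F` is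
concave and lies below its tangent line at `0`. That line has negative slope `-ν H'(0) H(0) ^ (-ν - 1)`
and vanishes at `H(0) / (ν H'(0))`, whereas `F > 0` wherever `H` is defined and positive.
-/

open Set

section RpowNeg

variable {H : ℝ → ℝ} {ν t : ℝ}

theorem hasDerivAt_rpow_neg (hH : 0 < H t) (hd : DifferentiableAt ℝ H t) :
    HasDerivAt (fun s ↦ H s ^ (-ν)) (-ν * deriv H t * H t ^ (-ν - 1)) t := by
  convert hd.hasDerivAt.rpow_const (p := -ν) (Or.inl hH.ne') using 1
  ring

theorem hasDerivAt_deriv_mul_rpow_neg (hH : 0 < H t) (hd1 : DifferentiableAt ℝ H t)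
    (hd2 : DifferentiableAt ℝ (deriv H) t) :
    HasDerivAt (fun s ↦ -ν * deriv H s * H s ^ (-ν - 1))
      (-ν * H t ^ (-ν - 2) * (deriv (deriv H) t * H t - (1 + ν) * deriv H t ^ 2)) t := by
  have hprod := ((hd2.hasDerivAt.const_mul (-ν)).mul
    (hd1.hasDerivAt.rpow_const (p := -ν - 1) (Or.inl hH.ne')))
  have hsplit : H t ^ (-ν - 1) = H t ^ (-ν - 2) * H t := by
    rw [show -ν - 1 = -ν - 2 + 1 by ring, Real.rpow_add_one hH.ne']
  refine hprod.congr_deriv ?_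
  rw [hsplit, show -ν - 1 - 1 = -ν - 2 by ring]
  ring

theorem concaveOn_rpow_neg {D : Set ℝ} (hD : Convex ℝ D) (hν : 0 ≤ ν)
    (hpos : ∀ t ∈ D, 0 < H t) (hd1 : ∀ t ∈ D, DifferentiableAt ℝ H t)
    (hd2 : ∀ t ∈ interior D, DifferentiableAt ℝ (deriv H) t)
    (hineq : ∀ t ∈ interior D, 0 ≤ deriv (deriv H) t * H t - (1 + ν) * deriv H t ^ 2) :
    ConcaveOn ℝ D (fun t ↦ H t ^ (-ν)) := by
  refine concaveOn_of_hasDerivWithinAt2_nonpos hD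
    (fun t ht ↦ (hasDerivAt_rpow_neg (hpos t ht) (hd1 t ht)).continuousAt.continuousWithinAt)
    (fun t ht ↦ (hasDerivAt_rpow_neg (hpos t (interior_subset ht))
      (hd1 t (interior_subset ht))).hasDerivWithinAt)
    (fun t ht ↦ (hasDerivAt_deriv_mul_rpow_neg (hpos t (interior_subset ht))
      (hd1 t (interior_subset ht)) (hd2 t ht)).hasDerivWithinAt) fun t ht ↦ ?_
  have hH := hpos t (interior_subset ht)
  have : 0 ≤ ν * H t ^ (-ν - 2) := mul_nonneg hν (Real.rpow_nonneg hH.le _)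
  nlinarith [mul_nonneg this (hineq t ht)]

end RpowNeg

theorem ConcaveOn.lt_sub_div_of_hasDerivAt {S : Set ℝ} {f : ℝ → ℝ} {f' a t : ℝ}
    (hf : ConcaveOn ℝ S f) (ha : a ∈ S) (hf' : HasDerivAt f f' a) (hf'neg : f' < 0)
    (ht : t ∈ S) (hat : a < t) (hft : 0 < f t) : t < a - f a / f' := by
  have hslope := hf.slope_le_of_hasDerivAt ha ht hat hf'
  rw [slope_def_field, div_le_iff₀ (sub_pos.mpr hat)] at hslope
  have : t - a < -f a / f' := by
    rw [lt_div_iff_of_neg hf'neg]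
    linarith
  rw [neg_div] at this
  linarith

theorem levine_blow_up_general (ν T : ℝ) (hν : 0 < ν) (H : ℝ → ℝ)
    (hpos : ∀ t ∈ Ico (0 : ℝ) T, 0 < H t)
    (hd1 : ∀ t ∈ Ico (0 : ℝ) T, DifferentiableAt ℝ H t)
    (hd2 : ∀ t ∈ Ico (0 : ℝ) T, DifferentiableAt ℝ (deriv H) t)
    (hineq : ∀ t ∈ Ico (0 : ℝ) T,
      0 ≤ deriv (deriv H) t * H t - (1 + ν) * (deriv H t) ^ 2)
    (h0 : 0 < H 0) (h0' : 0 < deriv H 0) :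
    T ≤ H 0 / (ν * deriv H 0) := by
  by_contra! hT
  have ht₁ : 0 < H 0 / (ν * deriv H 0) := by positivity
  have h0mem : (0 : ℝ) ∈ Ico 0 T := ⟨le_rfl, ht₁.trans hT⟩
  have hconcave := concaveOn_rpow_neg (convex_Ico 0 T) hν.le hpos hd1
    (fun t ht ↦ hd2 t (interior_subset ht)) (fun t ht ↦ hineq t (interior_subset ht))
  have hslope_neg : -ν * deriv H 0 * H 0 ^ (-ν - 1) < 0 :=
    mul_neg_of_neg_of_pos (mul_neg_of_neg_of_pos (neg_neg_of_pos hν) h0')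
      (Real.rpow_pos_of_pos h0 _)
  have htangent_zero : 0 - H 0 ^ (-ν) / (-ν * deriv H 0 * H 0 ^ (-ν - 1)) =
      H 0 / (ν * deriv H 0) := by
    rw [Real.rpow_sub_one h0.ne']
    field_simp
    ring
  have := hconcave.lt_sub_div_of_hasDerivAt h0mem (hasDerivAt_rpow_neg h0 (hd1 0 h0mem))
    hslope_neg ⟨ht₁.le, hT⟩ ht₁ (Real.rpow_pos_of_pos (hpos _ ⟨ht₁.le, hT⟩) _)
  exact lt_irrefl _ (htangent_zero ▸ this)

theorem levine_blow_up (ν T : ℝ) (hν : 0 < ν) (hT : 0 < T) (H : ℝ → ℝ)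
    (hpos : ∀ t ∈ Ico (0 : ℝ) T, 0 < H t)
    (hd1 : ∀ t ∈ Ico (0 : ℝ) T, DifferentiableAt ℝ H t)
    (hd2 : ∀ t ∈ Ico (0 : ℝ) T, DifferentiableAt ℝ (deriv H) t)
    (hineq : ∀ t ∈ Ico (0 : ℝ) T,
      0 ≤ deriv (deriv H) t * H t - (1 + ν) * (deriv H t) ^ 2)
    (h0 : 0 < H 0) (h0' : 0 < deriv H 0) :
    T ≤ H 0 / (ν * deriv H 0) :=
  levine_blow_up_general ν T hν H hpos hd1 hd2 hineq h0 h0'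
end

section
/- Under the hypotheses p·g(p) ≤ 2(1+2ν)G(p) for all p (ν > 0), and with H(t) = ‖a(t)‖² + b₀(t+t₀)² where a : [0,T) → L² is C² satisfying a'' such that ⟨a, a''⟩ = −‖c(t)‖² − ∫ u g(u) dx (with c(t) = B^{-1/2}Ku(t)), and energy E(t) = ‖a'(t)‖² + ‖c(t)‖² + 2∫G(u)dx = E(0), one has H H'' − (1+ν)(H')² ≥ −2(1+2ν)H(t)(E(0) + b₀). -/
open Set MeasureTheory
open scoped RealInnerProductSpace

theorem blow_up_functional_inequality {E : Type*} [NormedAddCommGroup E]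
    [InnerProductSpace ℝ E]
    (T ν b₀ t₀ E0 : ℝ) (hν : 0 < ν) (hb₀ : 0 < b₀) (ht₀ : 0 < t₀)
    (g G : ℝ → ℝ) (hpg : ∀ p : ℝ, p * g p ≤ 2 * (1 + 2 * ν) * G p)
    (u : ℝ → ℝ → ℝ) (a c : ℝ → E)
    (hug : ∀ t ∈ Ico (0 : ℝ) T, Integrable (fun x => u t x * g (u t x)))
    (hGu : ∀ t ∈ Ico (0 : ℝ) T, Integrable (fun x => G (u t x)))
    (hinner : ∀ t ∈ Ico (0 : ℝ) T,
      ⟪a t, deriv (deriv a) t⟫ = -‖c t‖ ^ 2 - ∫ x : ℝ, u t x * g (u t x))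
    (henergy : ∀ t ∈ Ico (0 : ℝ) T,
      ‖deriv a t‖ ^ 2 + ‖c t‖ ^ 2 + 2 * ∫ x : ℝ, G (u t x) = E0) :
    ∀ t ∈ Ico (0 : ℝ) T,
      (‖a t‖ ^ 2 + b₀ * (t + t₀) ^ 2) *
          (2 * ‖deriv a t‖ ^ 2 + 2 * ⟪a t, deriv (deriv a) t⟫ + 2 * b₀) -
        (1 + ν) * (2 * ⟪a t, deriv a t⟫ + 2 * b₀ * (t + t₀)) ^ 2 ≥
        -2 * (1 + 2 * ν) * (‖a t‖ ^ 2 + b₀ * (t + t₀) ^ 2) * (E0 + b₀) := by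
  intro t ht
  -- integral inequality
  have hI : (∫ x : ℝ, u t x * g (u t x)) ≤ 2 * (1 + 2 * ν) * ∫ x : ℝ, G (u t x) := by
    rw [← integral_const_mul]
    exact integral_mono (hug t ht) ((hGu t ht).const_mul _) (fun x => hpg (u t x))
  set A := ‖a t‖ with hA
  set B := ‖deriv a t‖ with hB
  set K := ‖c t‖ with hK
  set s := ⟪a t, deriv a t⟫ with hs
  set r := t + t₀ with hr
  have hIeq := hinner t ht
  have hEeq := henergy t ht
  have hCS : s ^ 2 ≤ A ^ 2 * B ^ 2 := by
    have := abs_real_inner_le_norm (a t) (deriv a t)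
    have h2 : |s| ^ 2 ≤ (A * B) ^ 2 := by
      apply pow_le_pow_left₀ (abs_nonneg _) this
    rw [sq_abs] at h2
    nlinarith
  have hA0 : 0 ≤ A := norm_nonneg _
  have hB0 : 0 ≤ B := norm_nonneg _
  have hK0 : 0 ≤ K := norm_nonneg _
  -- big Cauchy–Schwarz: (s + b₀ r)^2 ≤ (A^2 + b₀ r^2)(B^2 + b₀)
  have hr0 : 0 < r := by
    have := ht.1
    simp only [hr]; linarith
  have hsle : s ≤ A * B := le_trans (le_abs_self _) (abs_real_inner_le_norm _ _)
  have hcs2 : (s + b₀ * r) ^ 2 ≤ (A ^ 2 + b₀ * r ^ 2) * (B ^ 2 + b₀) := by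
    nlinarith [sq_nonneg (A - B * r), hb₀.le, hr0.le, mul_nonneg hb₀.le hr0.le,
      mul_le_mul_of_nonneg_right hsle (mul_nonneg hb₀.le hr0.le)]
  have hH0 : 0 ≤ A ^ 2 + b₀ * r ^ 2 := by positivity
  rw [hIeq, ← hEeq]
  nlinarith [mul_le_mul_of_nonneg_left hcs2 (by linarith : (0:ℝ) ≤ 1 + ν),
    mul_nonneg (mul_nonneg (by linarith : (0:ℝ) ≤ 4 * ν) hH0) (sq_nonneg K),
    mul_le_mul_of_nonneg_left hI (by positivity : (0:ℝ) ≤ 2 * (A ^ 2 + b₀ * r ^ 2))]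
end
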